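/- Let Γ_H be the H-shaped tree with positive travel times t_1,…,t_5 and set S := T − t_3. Then for every real T: B(Γ_H, B, S) + 2·W(2t_1,2t_2;S) + 2·#{(n_1,n_2,n_4) ∈ ℕ^3 : n_4 ≥ 1, n_1+n_2 ≥ 1, 2n_1t_1+2n_2t_2+2n_4t_4 ≤ S} + 2·#{(n_1,n_2,n_5) ∈ ℕ^3 : n_5 ≥ 1, n_1+n_2 ≥ 1, 2n_1t_1+2n_2t_2+2n_5t_5 ≤ S} + #{(n_1,n_2,n_4,n_5) ∈ ℕ^4 : n_4 ≥ 1, n_5 ≥ 1, n_1+n_2 ≥ 1, 2n_1t_1+2n_2t_2+2n_4t_4+2n_5t_5 ≤ S} = W(2t_1,2t_2,2t_3,2t_4;S) + W(2t_1,2t_2,2t_3,2t_5;S) + W(2t_1,2t_2,2t_4,2t_5;S) − W(2t_1,2t_2;S). (The left-hand side is the number N(Γ_H, A, B, T) of new points born at B up to time T for a point starting from A, when the travel times are linearly independent over ℚ.) -/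

import Mathlib

open SimpleGraph

/-- `F` is the edge set of a rooted subtree (a connected subgraph containing the root `X`,
determined by its edge set) of the graph `G`. -/
def IsRootedSubtree {V : Type*} (G : SimpleGraph V) (X : V) (F : Set (Sym2 V)) : Prop :=
  F ⊆ G.edgeSet ∧ ∀ v : V, (∃ e ∈ F, v ∈ e) → (SimpleGraph.fromEdgeSet F).Reachable X v

-- `B(G, X, T)`: the sum, over all pairs `(Γ', n)` where `Γ'` is a rooted subtree (root `X`)
-- with nonempty edge set `F` and `n` assigns a positive integer to every edge of `Γ'` with
-- `∑_{e ∈ F} 2 n_e t_e ≤ T`, of the weight `deg X - r(Γ')`, where `r(Γ')` is the number of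
-- edges of `Γ'` incident to `X`.
open scoped Classical in
noncomputable def Bcount {V : Type*} [Fintype V] [DecidableEq V]
    (G : SimpleGraph V) (X : V) (t : Sym2 V → ℝ) (T : ℝ) : ℤ :=
  ∑ F : Finset (Sym2 V),
    if IsRootedSubtree G X ↑F ∧ F.Nonempty then
      ((Nat.card {w : V | G.Adj X w} : ℤ) - ((F.filter (fun e => X ∈ e)).card : ℤ)) *
        (Nat.card {n : Sym2 V → ℕ |
          (∀ e ∈ F, 1 ≤ n e) ∧ (∀ e ∉ F, n e = 0) ∧
          ∑ e ∈ F, (n e : ℝ) * (2 * t e) ≤ T} : ℤ)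
    else 0

/-- `W(s₁, …, s_m; T)`: the number of `m`-tuples of nonnegative integers `(n₁, …, n_m)` with
`s₁ n₁ + ⋯ + s_m n_m ≤ T`. -/
noncomputable def W {m : ℕ} (s : Fin m → ℝ) (T : ℝ) : ℕ :=
  Nat.card {n : Fin m → ℕ | ∑ i, (n i : ℝ) * s i ≤ T}

/-- The H-shaped tree `Γ_H`: inner vertices `A = 0` and `B = 1`; pendant edges
`e₁ = s(0,2)`, `e₂ = s(0,3)` at `A`; the jumper `e₃ = s(0,1)`; pendant edges
`e₄ = s(1,4)`, `e₅ = s(1,5)` at `B`. -/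
def GammaH : SimpleGraph (Fin 6) :=
  SimpleGraph.fromEdgeSet {s(0, 2), s(0, 3), s(0, 1), s(1, 4), s(1, 5)}

open Finset

/-!
Every count in the identity splits according to the support `J ⊆ {e₁, …, e₅}` of the
multiplicity vector: it equals `∑_J c(J) · P(J)`, where
`P(J) = #{n : supp n = J, ∑ 2 nₑ tₑ ≤ S}` and the coefficient `c(J)` depends only on `J`
(the weight `deg B − r` of the rooted subtree `J` for `B(Γ_H, B, S)`, an indicator of a
support condition for every other term). The identity thus reduces to one between the
coefficients, which is checked on the 32 subsets `J`.
-/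

section SupportCount

variable {ι α β : Type*} [Fintype ι] [Fintype α] [Fintype β]

def natSupport (n : ι → ℕ) : Finset ι := {i | n i ≠ 0}

@[simp]
theorem mem_natSupport {n : ι → ℕ} {i : ι} : i ∈ natSupport n ↔ n i ≠ 0 := by
  simp [natSupport]

noncomputable def supportCount (s : ι → ℝ) (S : ℝ) (J : Finset ι) : ℕ :=
  Nat.card {n : ι → ℕ | natSupport n = J ∧ ∑ i, (n i : ℝ) * s i ≤ S}

theorem natSupport_eq_iff {n : ι → ℕ} {F : Finset ι} :
    natSupport n = F ↔ (∀ i ∈ F, 1 ≤ n i) ∧ ∀ i ∉ F, n i = 0 := by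
  simp only [Finset.ext_iff, mem_natSupport, Nat.one_le_iff_ne_zero]
  grind

theorem card_setOf_pos_on_eq_supportCount (s : ι → ℝ) (S : ℝ) (F : Finset ι) :
    Nat.card {n : ι → ℕ | (∀ i ∈ F, 1 ≤ n i) ∧ (∀ i ∉ F, n i = 0) ∧ ∑ i ∈ F, (n i : ℝ) * s i ≤ S}
      = supportCount s S F := by
  rw [supportCount]
  congr
  ext n
  rw [natSupport_eq_iff, and_assoc]
  refine and_congr_right fun _ => and_congr_right fun h0 => ?_
  rw [sum_subset (subset_univ F) fun i _ hi => by simp [h0 i hi]]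

theorem finite_setOf_sum_mul_le {s : ι → ℝ} (hs : ∀ i, 0 < s i) (S : ℝ) :
    {n : ι → ℕ | ∑ i, (n i : ℝ) * s i ≤ S}.Finite := by
  refine (Set.Finite.pi' fun i => Set.finite_Iic ⌊S / s i⌋₊).subset fun n hn i => ?_
  refine Nat.le_floor ((le_div_iff₀ (hs i)).2 (le_trans ?_ hn))
  exact single_le_sum (f := fun i => (n i : ℝ) * s i)
    (fun j _ => mul_nonneg (Nat.cast_nonneg _) (hs j).le) (mem_univ i)

theorem card_eq_sum_supportCount {s : ι → ℝ} (hs : ∀ i, 0 < s i) (S : ℝ)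
    (q : Finset ι → Prop) [DecidablePred q] :
    Nat.card {n : ι → ℕ | q (natSupport n) ∧ ∑ i, (n i : ℝ) * s i ≤ S}
      = ∑ J with q J, supportCount s S J := by
  classical
  set A := (finite_setOf_sum_mul_le hs S).toFinset
  have hcard (p : (ι → ℕ) → Prop) [DecidablePred p] :
      Nat.card {n : ι → ℕ | p n ∧ ∑ i, (n i : ℝ) * s i ≤ S} = #{n ∈ A | p n} := by
    rw [← Set.ncard_coe_finset, ← Nat.card_coe_set_eq]
    congr
    ext n
    simp [A, and_comm]
  rw [hcard fun n => q (natSupport n),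
    card_eq_sum_card_fiberwise (f := natSupport) (t := {J | q J})
      fun n hn => mem_filter.2 ⟨mem_univ _, (mem_filter.1 hn).2⟩]
  refine sum_congr rfl fun J hJ => ?_
  rw [supportCount, hcard fun n => natSupport n = J, filter_filter]
  congr 1
  exact filter_congr fun n _ => ⟨fun h => h.2, fun h => ⟨h ▸ (mem_filter.1 hJ).2, h⟩⟩

theorem sum_comp_embedding_eq_sum (e : α ↪ β) (s : β → ℝ) {n : β → ℕ}
    (hn : ∀ b ∉ Set.range e, n b = 0) :
    ∑ a, (n (e a) : ℝ) * s (e a) = ∑ b, (n b : ℝ) * s b :=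
  Fintype.sum_of_injective e e.injective _ _ (fun b hb => by simp [hn b hb]) fun _ => rfl

theorem supportCount_map (e : α ↪ β) (s : β → ℝ) (S : ℝ) (K : Finset α) :
    supportCount s S (K.map e) = supportCount (fun a => s (e a)) S K := by
  classical
  have hzero {n : β → ℕ} (hn : natSupport n = K.map e) (b : β) (hb : b ∉ Set.range e) :
      n b = 0 := by
    by_contra h
    obtain ⟨a, -, rfl⟩ := mem_map.1 (hn ▸ mem_natSupport.2 h)
    exact hb ⟨a, rfl⟩
  have hsupp {n : β → ℕ} (hn : natSupport n = K.map e) : natSupport (fun a => n (e a)) = K := by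
    ext a
    rw [mem_natSupport, ← mem_natSupport (n := n), hn, mem_map' e]
  refine Nat.card_congr
    { toFun := fun n => ⟨fun a => n.1 (e a), hsupp n.2.1,
        (sum_comp_embedding_eq_sum e s (hzero n.2.1)).trans_le n.2.2⟩
      invFun := fun m => ⟨Function.extend e m.1 0, ?_, ?_⟩
      left_inv := fun n => ?_
      right_inv := fun m => ?_ }
  · ext b
    by_cases hb : b ∈ Set.range e
    · obtain ⟨a, rfl⟩ := hb
      simp [e.injective.extend_apply, ← m.2.1]
    · rw [mem_natSupport, Function.extend_apply' _ _ _ hb]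
      simpa using fun a _ h => hb ⟨a, h⟩
  · rw [← sum_comp_embedding_eq_sum e s fun b hb => Function.extend_apply' (f := e) m.1 0 b hb]
    simpa only [e.injective.extend_apply] using m.2.2
  · ext b
    by_cases hb : b ∈ Set.range e
    · obtain ⟨a, rfl⟩ := hb
      exact e.injective.extend_apply _ _ a
    · exact (Function.extend_apply' _ _ _ hb).trans (hzero n.2.1 b hb).symm
  · ext a
    exact e.injective.extend_apply _ _ a

theorem card_eq_sum_supportCount_of_embedding (e : α ↪ β)
    {s : β → ℝ} {s' : α → ℝ} (hs' : ∀ a, s (e a) = s' a) (hpos : ∀ a, 0 < s (e a)) (S : ℝ)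
    {q : Finset α → Prop} [DecidablePred q] {Q : Finset β → Prop} [DecidablePred Q]
    (hQ : ∀ K, Q (K.map e) ↔ q K) (hQ_subset : ∀ J, Q J → J ⊆ univ.map e) :
    Nat.card {m : α → ℕ | q (natSupport m) ∧ ∑ a, (m a : ℝ) * s' a ≤ S}
      = ∑ J with Q J, supportCount s S J := by
  obtain rfl : s' = fun a => s (e a) := funext fun a => (hs' a).symm
  rw [card_eq_sum_supportCount hpos, sum_filter, sum_filter]
  refine Fintype.sum_of_injective (map e) (map_injective e) _ _ (fun J hJ => ?_) fun K => ?_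
  · rw [if_neg]
    intro hQJ
    obtain ⟨K, -, rfl⟩ := subset_map_iff.1 (hQ_subset J hQJ)
    exact hJ ⟨K, rfl⟩
  · simp only [hQ, supportCount_map]

theorem W_eq_sum_supportCount {m : ℕ} [DecidableEq β] (e : Fin m ↪ β) {s : β → ℝ}
    {s' : Fin m → ℝ} (hs' : ∀ a, s (e a) = s' a) (hpos : ∀ a, 0 < s (e a)) (S : ℝ)
    {J₀ : Finset β} (hJ₀ : univ.map e = J₀) :
    W s' S = ∑ J with J ⊆ J₀, supportCount s S J := by
  subst hJ₀
  simpa [W] using card_eq_sum_supportCount_of_embedding e hs' hpos S (q := fun _ => True)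
    (Q := (· ⊆ univ.map e)) (fun K => iff_true_intro (map_subset_map.2 (subset_univ K)))
    fun _ h => h

end SupportCount

section GammaH

-- Index `i` is the edge `e_{i+1}` of `Γ_H`.
def gammaHEdge : Fin 5 ↪ Sym2 (Fin 6) :=
  ⟨![s(0, 2), s(0, 3), s(0, 1), s(1, 4), s(1, 5)], by decide⟩

theorem edgeSet_gammaH : GammaH.edgeSet = ↑(univ.map gammaHEdge) := by
  ext e
  induction e using Sym2.ind with | _ v w => ?_
  simp only [GammaH, edgeSet_fromEdgeSet]
  revert v w
  decide

theorem card_neighborSet_gammaH_one : Nat.card {w : Fin 6 | GammaH.Adj 1 w} = 3 := by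
  rw [show {w : Fin 6 | GammaH.Adj 1 w} = {0, 4, 5} by ext w; fin_cases w <;> simp [GammaH]]
  simp

theorem isRootedSubtree_gammaH_map_iff (K : Finset (Fin 5)) :
    IsRootedSubtree GammaH 1 ↑(K.map gammaHEdge) ∧ (K.map gammaHEdge).Nonempty
      ↔ K.Nonempty ∧ (0 ∈ K ∨ 1 ∈ K → 2 ∈ K) := by
  rw [IsRootedSubtree, edgeSet_gammaH, coe_subset]
  revert K
  decide

theorem card_filter_map_gammaHEdge (K : Finset (Fin 5)) :
    #{e ∈ K.map gammaHEdge | 1 ∈ e} = #(K ∩ {2, 3, 4}) := by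
  revert K
  decide

noncomputable def doubledTimes (t₁ t₂ t₃ t₄ t₅ : ℝ) : Fin 5 → ℝ :=
  ![2 * t₁, 2 * t₂, 2 * t₃, 2 * t₄, 2 * t₅]

-- `J` spans a rooted subtree at `B` iff it is nonempty and contains the jumper `e₃` as soon as
-- it contains `e₁` or `e₂`; the edges at `B` are `e₃, e₄, e₅`.
def rootedWeightAtB (K : Finset (Fin 5)) : ℤ :=
  if K.Nonempty ∧ (0 ∈ K ∨ 1 ∈ K → 2 ∈ K) then 3 - #(K ∩ {2, 3, 4}) else 0

variable {t₁ t₂ t₃ t₄ t₅ : ℝ} (S : ℝ)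

theorem Bcount_gammaH_eq {t : Sym2 (Fin 6) → ℝ}
    (he₁ : t s(0, 2) = t₁) (he₂ : t s(0, 3) = t₂) (he₃ : t s(0, 1) = t₃)
    (he₄ : t s(1, 4) = t₄) (he₅ : t s(1, 5) = t₅) :
    Bcount GammaH 1 t S
      = ∑ K, rootedWeightAtB K * supportCount (doubledTimes t₁ t₂ t₃ t₄ t₅) S K := by
  have ht : ∀ k, 2 * t (gammaHEdge k) = doubledTimes t₁ t₂ t₃ t₄ t₅ k := by
    intro k
    fin_cases k <;> simp [gammaHEdge, doubledTimes, *]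
  rw [Bcount]
  refine (Fintype.sum_of_injective (map gammaHEdge) (map_injective _) _ _
    (fun F hF => ?_) fun K => ?_).symm
  · rw [if_neg]
    rintro ⟨⟨hsub, -⟩, -⟩
    obtain ⟨K, -, rfl⟩ := subset_map_iff.1 (coe_subset.1 (edgeSet_gammaH ▸ hsub))
    exact hF ⟨K, rfl⟩
  · rw [card_setOf_pos_on_eq_supportCount, supportCount_map, card_neighborSet_gammaH_one,
      card_filter_map_gammaHEdge]
    simp only [ht, rootedWeightAtB, isRootedSubtree_gammaH_map_iff, ite_mul, zero_mul,
      Nat.cast_ofNat]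

theorem W_e12_eq (hpos : ∀ i, 0 < doubledTimes t₁ t₂ t₃ t₄ t₅ i) :
    W ![2*t₁, 2*t₂] S = ∑ J with J ⊆ {0, 1}, supportCount (doubledTimes t₁ t₂ t₃ t₄ t₅) S J :=
  W_eq_sum_supportCount ⟨![0, 1], by decide⟩ (fun i => by fin_cases i <;> rfl) (fun _ => hpos _) S
    (by decide)

theorem W_e1234_eq (hpos : ∀ i, 0 < doubledTimes t₁ t₂ t₃ t₄ t₅ i) :
    W ![2*t₁, 2*t₂, 2*t₃, 2*t₄] S
      = ∑ J with J ⊆ {0, 1, 2, 3}, supportCount (doubledTimes t₁ t₂ t₃ t₄ t₅) S J :=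
  W_eq_sum_supportCount ⟨![0, 1, 2, 3], by decide⟩ (fun i => by fin_cases i <;> rfl)
    (fun _ => hpos _) S (by decide)

theorem W_e1235_eq (hpos : ∀ i, 0 < doubledTimes t₁ t₂ t₃ t₄ t₅ i) :
    W ![2*t₁, 2*t₂, 2*t₃, 2*t₅] S
      = ∑ J with J ⊆ {0, 1, 2, 4}, supportCount (doubledTimes t₁ t₂ t₃ t₄ t₅) S J :=
  W_eq_sum_supportCount ⟨![0, 1, 2, 4], by decide⟩ (fun i => by fin_cases i <;> rfl)
    (fun _ => hpos _) S (by decide)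

theorem W_e1245_eq (hpos : ∀ i, 0 < doubledTimes t₁ t₂ t₃ t₄ t₅ i) :
    W ![2*t₁, 2*t₂, 2*t₄, 2*t₅] S
      = ∑ J with J ⊆ {0, 1, 3, 4}, supportCount (doubledTimes t₁ t₂ t₃ t₄ t₅) S J :=
  W_eq_sum_supportCount ⟨![0, 1, 3, 4], by decide⟩ (fun i => by fin_cases i <;> rfl)
    (fun _ => hpos _) S (by decide)

@[simps]
def tripleEquiv : ℕ × ℕ × ℕ ≃ (Fin 3 → ℕ) where
  toFun p := ![p.1, p.2.1, p.2.2]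
  invFun n := (n 0, n 1, n 2)
  left_inv _ := rfl
  right_inv n := by ext i; fin_cases i <;> rfl

@[simps]
def quadrupleEquiv : ℕ × ℕ × ℕ × ℕ ≃ (Fin 4 → ℕ) where
  toFun p := ![p.1, p.2.1, p.2.2.1, p.2.2.2]
  invFun n := (n 0, n 1, n 2, n 3)
  left_inv _ := rfl
  right_inv n := by ext i; fin_cases i <;> rfl

theorem card_triple_eq (hpos : ∀ i, 0 < doubledTimes t₁ t₂ t₃ t₄ t₅ i) {k : Fin 5}
    (hk : k = 3 ∨ k = 4) {u : ℝ} (hu : doubledTimes t₁ t₂ t₃ t₄ t₅ k = 2 * u) :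
    Nat.card {p : ℕ × ℕ × ℕ | 1 ≤ p.2.2 ∧ 1 ≤ p.1 + p.2.1 ∧
        2*(p.1 : ℝ)*t₁ + 2*(p.2.1 : ℝ)*t₂ + 2*(p.2.2 : ℝ)*u ≤ S}
      = ∑ J with k ∈ J ∧ (0 ∈ J ∨ 1 ∈ J) ∧ J ⊆ {0, 1, k},
          supportCount (doubledTimes t₁ t₂ t₃ t₄ t₅) S J := by
  rw [Nat.card_congr (tripleEquiv.subtypeEquiv (q := fun m =>
    (2 ∈ natSupport m ∧ (0 ∈ natSupport m ∨ 1 ∈ natSupport m)) ∧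
      ∑ i, (m i : ℝ) * ![2*t₁, 2*t₂, 2*u] i ≤ S) fun p => ?_)]
  · have hinj : Function.Injective ![(0 : Fin 5), 1, k] := by rcases hk with rfl | rfl <;> decide
    refine card_eq_sum_supportCount_of_embedding ⟨_, hinj⟩ (fun i => ?_) (fun _ => hpos _) S
      (q := fun K => 2 ∈ K ∧ (0 ∈ K ∨ 1 ∈ K)) (fun K => ?_) fun J => ?_
    · fin_cases i <;> simp [hu] <;> rfl
    all_goals
      simp only [map_eq_image, Function.Embedding.coeFn_mk]
      rcases hk with rfl | rfl <;> decide +revert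
  · simp [Fin.sum_univ_three, Nat.one_le_iff_ne_zero, and_assoc, mul_comm, mul_left_comm]
    tauto

theorem card_quadruple_eq (hpos : ∀ i, 0 < doubledTimes t₁ t₂ t₃ t₄ t₅ i) :
    Nat.card {p : ℕ × ℕ × ℕ × ℕ | 1 ≤ p.2.2.1 ∧ 1 ≤ p.2.2.2 ∧ 1 ≤ p.1 + p.2.1 ∧
        2*(p.1 : ℝ)*t₁ + 2*(p.2.1 : ℝ)*t₂ + 2*(p.2.2.1 : ℝ)*t₄ + 2*(p.2.2.2 : ℝ)*t₅ ≤ S}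
      = ∑ J with 3 ∈ J ∧ 4 ∈ J ∧ (0 ∈ J ∨ 1 ∈ J) ∧ J ⊆ {0, 1, 3, 4},
          supportCount (doubledTimes t₁ t₂ t₃ t₄ t₅) S J := by
  rw [Nat.card_congr (quadrupleEquiv.subtypeEquiv (q := fun m =>
    (2 ∈ natSupport m ∧ 3 ∈ natSupport m ∧ (0 ∈ natSupport m ∨ 1 ∈ natSupport m)) ∧
      ∑ i, (m i : ℝ) * ![2*t₁, 2*t₂, 2*t₄, 2*t₅] i ≤ S) fun p => ?_)]
  · refine card_eq_sum_supportCount_of_embedding ⟨![0, 1, 3, 4], by decide⟩ (fun i => ?_)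
      (fun _ => hpos _) S (q := fun K => 2 ∈ K ∧ 3 ∈ K ∧ (0 ∈ K ∨ 1 ∈ K)) (by decide) (by decide)
    fin_cases i <;> rfl
  · simp [Fin.sum_univ_four, Nat.one_le_iff_ne_zero, and_assoc, mul_comm, mul_left_comm]
    tauto

theorem rootedWeightAtB_add_indicators_eq (J : Finset (Fin 5)) :
    rootedWeightAtB J + 2 * (if J ⊆ {0, 1} then 1 else 0)
        + 2 * (if 3 ∈ J ∧ (0 ∈ J ∨ 1 ∈ J) ∧ J ⊆ {0, 1, 3} then 1 else 0)
        + 2 * (if 4 ∈ J ∧ (0 ∈ J ∨ 1 ∈ J) ∧ J ⊆ {0, 1, 4} then 1 else 0)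
        + (if 3 ∈ J ∧ 4 ∈ J ∧ (0 ∈ J ∨ 1 ∈ J) ∧ J ⊆ {0, 1, 3, 4} then 1 else 0)
      = (if J ⊆ {0, 1, 2, 3} then 1 else 0) + (if J ⊆ {0, 1, 2, 4} then 1 else 0)
        + (if J ⊆ {0, 1, 3, 4} then 1 else 0) - (if J ⊆ {0, 1} then 1 else 0) := by
  revert J
  decide

end GammaH

/-- with `S := T - t₃`,
`B(Γ_H, B, S) + 2·W(2t₁,2t₂;S)
  + 2·#{(n₁,n₂,n₄) : n₄ ≥ 1, n₁+n₂ ≥ 1, 2n₁t₁+2n₂t₂+2n₄t₄ ≤ S}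
  + 2·#{(n₁,n₂,n₅) : n₅ ≥ 1, n₁+n₂ ≥ 1, 2n₁t₁+2n₂t₂+2n₅t₅ ≤ S}
  + #{(n₁,n₂,n₄,n₅) : n₄ ≥ 1, n₅ ≥ 1, n₁+n₂ ≥ 1, 2n₁t₁+2n₂t₂+2n₄t₄+2n₅t₅ ≤ S}
 = W(2t₁,2t₂,2t₃,2t₄;S) + W(2t₁,2t₂,2t₃,2t₅;S) + W(2t₁,2t₂,2t₄,2t₅;S) − W(2t₁,2t₂;S)`
(the left-hand side is the number `N(Γ_H, A, B, T)` of new points born at `B` up to time `T`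
for a point starting from `A`). -/
theorem N_A_B_eq (t₁ t₂ t₃ t₄ t₅ : ℝ)
    (h₁ : 0 < t₁) (h₂ : 0 < t₂) (h₃ : 0 < t₃) (h₄ : 0 < t₄) (h₅ : 0 < t₅)
    (t : Sym2 (Fin 6) → ℝ)
    (he₁ : t s(0, 2) = t₁) (he₂ : t s(0, 3) = t₂) (he₃ : t s(0, 1) = t₃)
    (he₄ : t s(1, 4) = t₄) (he₅ : t s(1, 5) = t₅)
    (T : ℝ) :
    Bcount GammaH 1 t (T - t₃)
      + 2 * (W ![2*t₁, 2*t₂] (T - t₃) : ℤ)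
      + 2 * (Nat.card {p : ℕ × ℕ × ℕ | 1 ≤ p.2.2 ∧ 1 ≤ p.1 + p.2.1 ∧
          2*(p.1 : ℝ)*t₁ + 2*(p.2.1 : ℝ)*t₂ + 2*(p.2.2 : ℝ)*t₄ ≤ T - t₃} : ℤ)
      + 2 * (Nat.card {p : ℕ × ℕ × ℕ | 1 ≤ p.2.2 ∧ 1 ≤ p.1 + p.2.1 ∧
          2*(p.1 : ℝ)*t₁ + 2*(p.2.1 : ℝ)*t₂ + 2*(p.2.2 : ℝ)*t₅ ≤ T - t₃} : ℤ)
      + (Nat.card {p : ℕ × ℕ × ℕ × ℕ | 1 ≤ p.2.2.1 ∧ 1 ≤ p.2.2.2 ∧ 1 ≤ p.1 + p.2.1 ∧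
          2*(p.1 : ℝ)*t₁ + 2*(p.2.1 : ℝ)*t₂ + 2*(p.2.2.1 : ℝ)*t₄
            + 2*(p.2.2.2 : ℝ)*t₅ ≤ T - t₃} : ℤ)
      = (W ![2*t₁, 2*t₂, 2*t₃, 2*t₄] (T - t₃) : ℤ)
        + (W ![2*t₁, 2*t₂, 2*t₃, 2*t₅] (T - t₃) : ℤ)
        + (W ![2*t₁, 2*t₂, 2*t₄, 2*t₅] (T - t₃) : ℤ)
        - (W ![2*t₁, 2*t₂] (T - t₃) : ℤ) := by
  have hpos : ∀ i, 0 < doubledTimes t₁ t₂ t₃ t₄ t₅ i := by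
    intro i
    fin_cases i <;> simp [doubledTimes, *]
  rw [Bcount_gammaH_eq _ he₁ he₂ he₃ he₄ he₅, W_e12_eq _ hpos, W_e1234_eq _ hpos,
    W_e1235_eq _ hpos, W_e1245_eq _ hpos, card_triple_eq _ hpos (.inl rfl) rfl,
    card_triple_eq _ hpos (.inr rfl) rfl, card_quadruple_eq _ hpos]
  push_cast
  simp only [sum_filter, mul_sum, ← sum_add_distrib, ← sum_sub_distrib]
  refine sum_congr rfl fun J _ => ?_
  simpa only [add_mul, sub_mul, mul_assoc, boole_mul] using
    congrArg (· * (supportCount (doubledTimes t₁ t₂ t₃ t₄ t₅) (T - t₃) J : ℤ))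
      (rootedWeightAtB_add_indicators_eq J)
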